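/- Eccentricity centrality violates Self-consistency: there exists a connected graph with vertices u, v and a bijection φ: N_u → N_v with f(w) ≤ f(φ(w)) for all w ∈ N_u and strict inequality for at least one w, yet f(u) ≥ f(v), where f(x) = (max_y d(x,y))^{-1}. -/

import Mathlib

/-- Eccentricity centrality `f(x) = (max_y d(x,y))⁻¹`. -/
noncomputable def eccCentrality {n : ℕ} (G : SimpleGraph (Fin n)) (x : Fin n) : ℝ :=
  ((Finset.univ.sup fun y => G.dist x y : ℕ) : ℝ)⁻¹

/-!
The banner graph, a 4-cycle `0-1-2-3` with a pendant vertex `4` attached to `0`, has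
eccentricities `2, 2, 3, 2, 3`. The vertex `u = 1` has neighbours `0, 2` of eccentricity `2, 3`,
while `v = 2` has neighbours `1, 3`, both of eccentricity `2`; so the neighbours of `u` are
pointwise at most as central as those of `v`, strictly so at `2 ↦ 3`, yet `u` is the more central.
-/

open Finset

namespace SimpleGraph

variable {V : Type*} {G : SimpleGraph V} {u v : V}

lemma edist_le_two_iff :
    G.edist u v ≤ 2 ↔ u = v ∨ G.Adj u v ∨ ∃ w, G.Adj u w ∧ G.Adj w v := by
  rw [← not_lt, two_lt_edist_iff, Set.eq_empty_iff_forall_notMem]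
  simp only [mem_commonNeighbors, G.adj_comm v]
  push Not
  tauto

lemma eccent_le_two_iff :
    G.eccent u ≤ 2 ↔ ∀ v, u = v ∨ G.Adj u v ∨ ∃ w, G.Adj u w ∧ G.Adj w v := by
  simp only [eccent_le_iff, edist_le_two_iff]

lemma two_le_edist_of_ne_of_not_adj (hne : u ≠ v) (hadj : ¬G.Adj u v) : 2 ≤ G.edist u v := by
  rw [← one_add_one_eq_two, ENat.add_one_le_iff ENat.one_ne_top, ← not_le,
    edist_le_one_iff_adj_or_eq]
  tauto

lemma Connected.eccent_eq_sup_dist [Fintype V] (hG : G.Connected) (x : V) :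
    G.eccent x = (univ.sup fun y => G.dist x y : ℕ) := by
  apply le_antisymm
  · obtain ⟨v, hv⟩ := G.exists_edist_eq_eccent_of_finite x
    rw [← hv, ← (hG x v).coe_dist_eq_edist]
    exact_mod_cast le_sup (f := fun y => G.dist x y) (mem_univ v)
  · obtain ⟨v, -, hv⟩ := exists_mem_eq_sup univ ⟨x, mem_univ x⟩ fun y => G.dist x y
    rw [hv, (hG x v).coe_dist_eq_edist]
    exact edist_le_eccent

end SimpleGraph

section

variable {n : ℕ} [Nontrivial (Fin n)] {G : SimpleGraph (Fin n)} {x y : Fin n}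

lemma eccCentrality_le_of_eccent_le (hG : G.Connected) (h : G.eccent x ≤ G.eccent y) :
    eccCentrality G y ≤ eccCentrality G x := by
  have hx := G.eccent_ne_zero x
  simp only [hG.eccent_eq_sup_dist, Nat.cast_le, ne_eq, Nat.cast_eq_zero] at h hx
  exact inv_anti₀ (by exact_mod_cast Nat.pos_of_ne_zero hx) (by exact_mod_cast h)

lemma eccCentrality_lt_of_eccent_lt (hG : G.Connected) (h : G.eccent x < G.eccent y) :
    eccCentrality G y < eccCentrality G x := by
  have hx := G.eccent_ne_zero x
  simp only [hG.eccent_eq_sup_dist, Nat.cast_lt, ne_eq, Nat.cast_eq_zero] at h hx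
  exact inv_strictAnti₀ (by exact_mod_cast Nat.pos_of_ne_zero hx) (by exact_mod_cast h)

end

open SimpleGraph

def bannerGraph : SimpleGraph (Fin 5) :=
  fromEdgeSet {s(0, 1), s(1, 2), s(2, 3), s(3, 0), s(0, 4)}

instance : DecidableRel bannerGraph.Adj := by unfold bannerGraph; infer_instance

lemma bannerGraph_connected : bannerGraph.Connected := by decide

lemma bannerGraph_eccent_one_le : bannerGraph.eccent 1 ≤ 2 := eccent_le_two_iff.mpr (by decide)

lemma bannerGraph_eccent_three_le : bannerGraph.eccent 3 ≤ 2 := eccent_le_two_iff.mpr (by decide)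

lemma bannerGraph_two_le_eccent_zero : 2 ≤ bannerGraph.eccent 0 :=
  (two_le_edist_of_ne_of_not_adj (v := 2) (by decide) (by decide)).trans edist_le_eccent

lemma bannerGraph_two_lt_eccent_two : 2 < bannerGraph.eccent 2 := by
  refine (two_lt_edist_iff (v := 4).mpr ⟨by decide, by decide, ?_⟩).trans_le edist_le_eccent
  ext w
  simp only [mem_commonNeighbors, Set.mem_empty_iff_false, iff_false]
  revert w
  decide

def bannerNeighborEquiv : {w // bannerGraph.Adj 1 w} ≃ {w // bannerGraph.Adj 2 w} :=
  ((Equiv.swap 0 1).trans (Equiv.swap 2 3)).subtypeEquiv (by decide)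

/-- Eccentricity centrality violates Self-consistency: there is a connected graph with
vertices `u, v` and a bijection `φ : N_u → N_v` with `f(w) ≤ f(φ(w))` for all `w ∈ N_u`
and strict inequality for at least one `w`, yet `f(u) ≥ f(v)`. -/
theorem eccentricity_violates_self_consistency :
    ∃ (n : ℕ) (G : SimpleGraph (Fin n)) (u v : Fin n),
      G.Connected ∧
      ∃ φ : {w // G.Adj u w} ≃ {w // G.Adj v w},
        (∀ w : {w // G.Adj u w}, eccCentrality G w ≤ eccCentrality G (φ w)) ∧
        (∃ w : {w // G.Adj u w}, eccCentrality G w < eccCentrality G (φ w)) ∧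
        eccCentrality G v ≤ eccCentrality G u := by
  have hG := bannerGraph_connected
  refine ⟨5, bannerGraph, 1, 2, hG, bannerNeighborEquiv, ?_, ⟨⟨2, by decide⟩, ?_⟩, ?_⟩
  · rintro ⟨w, hw⟩
    obtain rfl | rfl : w = 0 ∨ w = 2 := by revert w; decide
    · exact eccCentrality_le_of_eccent_le hG
        (bannerGraph_eccent_one_le.trans bannerGraph_two_le_eccent_zero)
    · exact eccCentrality_le_of_eccent_le hG
        (bannerGraph_eccent_three_le.trans bannerGraph_two_lt_eccent_two.le)
  · exact eccCentrality_lt_of_eccent_lt hG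
      (bannerGraph_eccent_three_le.trans_lt bannerGraph_two_lt_eccent_two)
  · exact eccCentrality_le_of_eccent_le hG
      (bannerGraph_eccent_one_le.trans bannerGraph_two_lt_eccent_two.le)
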